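/- For any two disjoint maximal commuting Pauli classes C₁ and C₂ in dimension d = 4, there exists a maximal commuting Pauli class C₃′, disjoint from C₁ and from C₂, such that the family {C₁, C₂, C₃′} is unextendible. -/

import Mathlib

open Matrix

noncomputable section

/-- Matrices on the Hilbert space of `n` qubits, with rows and columns indexed by
bit strings `Fin n → Fin 2`. -/
abbrev QMat (n : ℕ) := Matrix (Fin n → Fin 2) (Fin n → Fin 2) ℂ

/-- The single-qubit identity. -/
def pI : Matrix (Fin 2) (Fin 2) ℂ := 1

/-- The single-qubit Pauli X. -/
def pX : Matrix (Fin 2) (Fin 2) ℂ := !![0, 1; 1, 0]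

/-- The single-qubit Pauli Y. -/
def pY : Matrix (Fin 2) (Fin 2) ℂ := !![0, -Complex.I; Complex.I, 0]

/-- The single-qubit Pauli Z. -/
def pZ : Matrix (Fin 2) (Fin 2) ℂ := !![1, 0; 0, -1]

/-- The `n`-fold Kronecker product `W 0 ⊗ ⋯ ⊗ W (n-1)`, realized on indices
`Fin n → Fin 2`. -/
def kron (n : ℕ) (W : Fin n → Matrix (Fin 2) (Fin 2) ℂ) : QMat n :=
  fun v w => ∏ j, W j (v j) (w j)

/-- `M` is an `n`-qubit Pauli operator: an `n`-fold Kronecker product of matrices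
from `{I₂, X, Y, Z}`. -/
def IsPauliOp (n : ℕ) (M : QMat n) : Prop :=
  ∃ W : Fin n → Matrix (Fin 2) (Fin 2) ℂ,
    (∀ j, W j = pI ∨ W j = pX ∨ W j = pY ∨ W j = pZ) ∧ M = kron n W

/-- Two matrices are equal up to phase if one is a nonzero scalar multiple of the other. -/
def PhaseEq {m : Type*} (A B : Matrix m m ℂ) : Prop := ∃ c : ℂ, c ≠ 0 ∧ A = c • B

/-- A maximal commuting Pauli class in dimension `d = 2 ^ n`: a set of `d - 1`
pairwise commuting non-identity `n`-qubit Pauli operators, pairwise distinct up to phase. -/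
def IsMaxClass (n : ℕ) (C : Set (QMat n)) : Prop :=
  C.Finite ∧ C.ncard = 2 ^ n - 1 ∧
  (∀ U ∈ C, IsPauliOp n U ∧ U ≠ 1) ∧
  (∀ U ∈ C, ∀ V ∈ C, U * V = V * U) ∧
  (∀ U ∈ C, ∀ V ∈ C, U ≠ V → ¬ PhaseEq U V)

/-- Two classes are disjoint if no member of one is equal up to phase to a member of the other. -/
def ClassDisjoint {n : ℕ} (C D : Set (QMat n)) : Prop :=
  ∀ U ∈ C, ∀ V ∈ D, ¬ PhaseEq U V

/-- Two classes are equal up to phase (as sets of operators). -/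
def ClassPhaseEq {n : ℕ} (C D : Set (QMat n)) : Prop :=
  (∀ U ∈ C, ∃ V ∈ D, PhaseEq U V) ∧ (∀ V ∈ D, ∃ U ∈ C, PhaseEq U V)

/-- The standard Hermitian inner product on `ι → ℂ` (conjugate-linear in the first slot). -/
def cinner {ι : Type*} [Fintype ι] (x y : ι → ℂ) : ℂ :=
  ∑ k, (starRingEnd ℂ) (x k) * y k

/-!
Up to phase, `n`-qubit Pauli operators are labelled by vectors of `F₂^{2n}`; two of them commute
exactly when their labels are orthogonal for the standard symplectic form, and distinct labels
give trace-orthogonal, hence phase-inequivalent, operators. For two qubits a maximal commuting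
class is therefore an isotropic line `{a, b, a + b}` of `F₂⁴`, i.e. a line of the generalized
quadrangle `W(3, 2)`, and disjoint classes are disjoint lines. The theorem becomes a finite fact
about the 15 lines of `W(3, 2)`: two disjoint lines can be completed by a third one, disjoint from
both, such that every line meets one of the three. This is checked exhaustively.
-/

section Kronecker

variable {n : ℕ}

lemma kron_mul (W W' : Fin n → Matrix (Fin 2) (Fin 2) ℂ) :
    kron n W * kron n W' = kron n fun j => W j * W' j := by
  ext v w
  simp only [kron, mul_apply, ← Finset.prod_mul_distrib]
  rw [Finset.prod_univ_sum, Fintype.piFinset_univ]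

lemma kron_smul (c : Fin n → ℂ) (W : Fin n → Matrix (Fin 2) (Fin 2) ℂ) :
    kron n (fun j => c j • W j) = (∏ j, c j) • kron n W := by
  ext v w
  simp [kron, Finset.prod_mul_distrib]

lemma kron_one : kron n (fun _ => 1) = 1 := by
  ext v w
  by_cases h : v = w
  · subst h
    simp [kron]
  · obtain ⟨j, hj⟩ := Function.ne_iff.mp h
    simpa [kron, one_apply, h] using Finset.prod_eq_zero (Finset.mem_univ j) (by simp [hj])

lemma trace_kron (W : Fin n → Matrix (Fin 2) (Fin 2) ℂ) :
    (kron n W).trace = ∏ j, (W j).trace := by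
  simp only [trace, diag, kron]
  rw [Finset.prod_univ_sum, Fintype.piFinset_univ]

end Kronecker

lemma ZMod.eq_zero_or_eq_one (x : ZMod 2) : x = 0 ∨ x = 1 := by
  revert x
  decide

lemma prod_neg_one_pow_val {R ι : Type*} [CommRing R] (s : Finset ι) (f : ι → ZMod 2) :
    ∏ i ∈ s, (-1 : R) ^ (f i).val = (-1) ^ (∑ i ∈ s, f i).val := by
  rw [Finset.prod_pow_eq_pow_sum, neg_one_pow_eq_pow_mod_two, ← ZMod.val_natCast, Nat.cast_sum]
  simp only [ZMod.natCast_zmod_val]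

section SingleQubit

/-- The single-qubit Pauli operator `X^x Z^z` (up to phase) labelled by `(x, z) ∈ F₂²`. -/
def pauli1 (a : ZMod 2 × ZMod 2) : Matrix (Fin 2) (Fin 2) ℂ :=
  if a.1 = 0 then (if a.2 = 0 then pI else pZ) else (if a.2 = 0 then pX else pY)

lemma pauli1_zero : pauli1 0 = 1 := by
  simp [pauli1, pI]

lemma pauli1_mem (a : ZMod 2 × ZMod 2) :
    pauli1 a = pI ∨ pauli1 a = pX ∨ pauli1 a = pY ∨ pauli1 a = pZ := by
  unfold pauli1
  split_ifs <;> simp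

lemma exists_pauli1_eq {A : Matrix (Fin 2) (Fin 2) ℂ}
    (h : A = pI ∨ A = pX ∨ A = pY ∨ A = pZ) : ∃ a, pauli1 a = A := by
  rcases h with rfl | rfl | rfl | rfl
  exacts [⟨(0, 0), by simp [pauli1]⟩, ⟨(1, 0), by simp [pauli1]⟩,
    ⟨(1, 1), by simp [pauli1]⟩, ⟨(0, 1), by simp [pauli1]⟩]

lemma pauli1_mul_self (a : ZMod 2 × ZMod 2) : pauli1 a * pauli1 a = 1 := by
  obtain ⟨x, z⟩ := a
  rcases x.eq_zero_or_eq_one with rfl | rfl <;> rcases z.eq_zero_or_eq_one with rfl | rfl <;>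
    · ext i j
      fin_cases i <;> fin_cases j <;>
        simp [pauli1, pI, pX, pY, pZ, mul_apply, Fin.sum_univ_two]

lemma pauli1_mul_comm (a b : ZMod 2 × ZMod 2) :
    pauli1 b * pauli1 a = (-1 : ℂ) ^ (a.1 * b.2 + a.2 * b.1).val • (pauli1 a * pauli1 b) := by
  have two : (1 + 1 : ZMod 2) = 0 := rfl
  obtain ⟨x, z⟩ := a
  obtain ⟨x', z'⟩ := b
  rcases x.eq_zero_or_eq_one with rfl | rfl <;> rcases z.eq_zero_or_eq_one with rfl | rfl <;>
    rcases x'.eq_zero_or_eq_one with rfl | rfl <;> rcases z'.eq_zero_or_eq_one with rfl | rfl <;>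
    · ext i j
      fin_cases i <;> fin_cases j <;>
        simp [pauli1, pI, pX, pY, pZ, mul_apply, Fin.sum_univ_two, two, ZMod.val_one]

lemma trace_pauli1_mul (a b : ZMod 2 × ZMod 2) :
    (pauli1 a * pauli1 b).trace = if a = b then 2 else 0 := by
  obtain ⟨x, z⟩ := a
  obtain ⟨x', z'⟩ := b
  rcases x.eq_zero_or_eq_one with rfl | rfl <;> rcases z.eq_zero_or_eq_one with rfl | rfl <;>
    rcases x'.eq_zero_or_eq_one with rfl | rfl <;> rcases z'.eq_zero_or_eq_one with rfl | rfl <;>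
    simp [pauli1, pI, pX, pY, pZ, trace_fin_two] <;> norm_num

end SingleQubit

/-- Labels of `n`-qubit Pauli operators up to phase: the symplectic space `F₂^{2n}`,
one coordinate pair `(x, z)` per qubit. -/
abbrev PauliCode (n : ℕ) := Fin n → ZMod 2 × ZMod 2

namespace PauliCode

variable {n : ℕ}

def pauli (v : PauliCode n) : QMat n := kron n fun j => pauli1 (v j)

def symp (u v : PauliCode n) : ZMod 2 := ∑ j, ((u j).1 * (v j).2 + (u j).2 * (v j).1)

lemma isPauliOp_iff {M : QMat n} : IsPauliOp n M ↔ ∃ v : PauliCode n, pauli v = M := by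
  constructor
  · rintro ⟨W, hW, rfl⟩
    choose v hv using fun j => exists_pauli1_eq (hW j)
    exact ⟨v, by simp only [pauli, hv]⟩
  · rintro ⟨v, rfl⟩
    exact ⟨_, fun j => pauli1_mem (v j), rfl⟩

lemma pauli_zero : pauli (0 : PauliCode n) = 1 := by
  simp only [pauli, Pi.zero_apply, pauli1_zero]
  exact kron_one

lemma pauli_mul_self (v : PauliCode n) : pauli v * pauli v = 1 := by
  simp only [pauli, kron_mul, pauli1_mul_self]
  exact kron_one

lemma pauli_mul_comm (u v : PauliCode n) :
    pauli v * pauli u = (-1 : ℂ) ^ (symp u v).val • (pauli u * pauli v) := by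
  have h : (fun j => pauli1 (v j) * pauli1 (u j)) = fun j =>
      (-1 : ℂ) ^ ((u j).1 * (v j).2 + (u j).2 * (v j).1).val • (pauli1 (u j) * pauli1 (v j)) :=
    funext fun j => pauli1_mul_comm (u j) (v j)
  rw [pauli, pauli, kron_mul, kron_mul, h, kron_smul, prod_neg_one_pow_val, symp]

lemma pauli_mul_pauli_ne_zero (u v : PauliCode n) : pauli u * pauli v ≠ 0 := by
  intro h
  have hinv : pauli u * pauli v * (pauli v * pauli u) = 1 := by
    rw [mul_assoc, ← mul_assoc (pauli v), pauli_mul_self, one_mul, pauli_mul_self]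
  rw [h, zero_mul] at hinv
  exact zero_ne_one hinv

lemma commute_pauli_iff {u v : PauliCode n} : Commute (pauli u) (pauli v) ↔ symp u v = 0 := by
  rw [Commute, SemiconjBy, pauli_mul_comm u v]
  rcases (symp u v).eq_zero_or_eq_one with h | h
  · simp [h]
  · simp only [h, ZMod.val_one, pow_one, neg_smul, one_smul, one_ne_zero, iff_false]
    exact fun h' => pauli_mul_pauli_ne_zero u v
      (ext fun i j => CharZero.eq_neg_self_iff.mp (congrFun₂ h' i j))

lemma trace_pauli_mul (u v : PauliCode n) :
    (pauli u * pauli v).trace = if u = v then 2 ^ n else 0 := by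
  rw [pauli, pauli, kron_mul, trace_kron]
  simp only [trace_pauli1_mul, Finset.prod_ite_zero, Finset.mem_univ, forall_const, funext_iff]
  simp

lemma phaseEq_pauli_iff {u v : PauliCode n} : PhaseEq (pauli u) (pauli v) ↔ u = v := by
  refine ⟨fun ⟨c, hc, h⟩ => ?_, fun h => ⟨1, one_ne_zero, by rw [h, one_smul]⟩⟩
  have htr : (pauli u * pauli v).trace = c * 2 ^ n := by
    simp [h, pauli_mul_self]
  by_contra huv
  rw [trace_pauli_mul, if_neg huv] at htr
  exact mul_ne_zero hc (pow_ne_zero _ two_ne_zero) htr.symm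

lemma pauli_injective : Function.Injective (pauli (n := n)) := fun _ _ h =>
  phaseEq_pauli_iff.mp ⟨1, one_ne_zero, by rw [h, one_smul]⟩

lemma pauli_eq_one_iff {v : PauliCode n} : pauli v = 1 ↔ v = 0 := by
  rw [← pauli_zero, pauli_injective.eq_iff]

lemma classDisjoint_image_pauli_iff {S T : Finset (PauliCode n)} :
    ClassDisjoint (pauli '' (S : Set (PauliCode n))) (pauli '' (T : Set (PauliCode n))) ↔
      Disjoint S T := by
  simp only [ClassDisjoint, Set.forall_mem_image, phaseEq_pauli_iff, ← Finset.disjoint_coe,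
    Set.disjoint_iff_forall_ne]

lemma add_self (v : PauliCode n) : v + v = 0 := by
  funext j
  ext <;> exact CharTwo.add_self_eq_zero _

lemma symp_comm (u v : PauliCode n) : symp u v = symp v u :=
  Finset.sum_congr rfl fun _ _ => by ring

lemma symp_self (v : PauliCode n) : symp v v = 0 :=
  Finset.sum_eq_zero fun j _ => by rw [mul_comm (v j).2]; exact CharTwo.add_self_eq_zero _

lemma symp_add_right (u v w : PauliCode n) : symp u (v + w) = symp u v + symp u w := by
  simp only [symp, ← Finset.sum_add_distrib, Pi.add_apply, Prod.fst_add, Prod.snd_add]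
  exact Finset.sum_congr rfl fun _ _ => by ring

lemma symp_add_left (u v w : PauliCode n) : symp (u + v) w = symp u w + symp v w := by
  rw [symp_comm, symp_add_right, symp_comm w, symp_comm w]

def IsIsotropicPair (a b : PauliCode n) : Prop := a ≠ 0 ∧ b ≠ 0 ∧ a ≠ b ∧ symp a b = 0

instance (a b : PauliCode n) : Decidable (IsIsotropicPair a b) := by
  unfold IsIsotropicPair
  infer_instance

def line (a b : PauliCode n) : Finset (PauliCode n) := {a, b, a + b}

namespace IsIsotropicPair

variable {a b : PauliCode n}

lemma card_line (h : IsIsotropicPair a b) : (line a b).card = 3 := by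
  obtain ⟨ha, hb, hab, -⟩ := h
  rw [line, Finset.card_eq_three]
  exact ⟨a, b, a + b, hab, by simpa using hb, by simpa using ha, rfl⟩

lemma zero_notMem_line (h : IsIsotropicPair a b) : 0 ∉ line a b := by
  obtain ⟨ha, hb, hab, -⟩ := h
  have hsum : a + b ≠ 0 := fun h0 => hab (by
    rw [← add_zero a, ← add_self b, ← add_assoc, h0, zero_add])
  simp [line, ha.symm, hb.symm, hsum.symm]

lemma symp_eq_zero (h : IsIsotropicPair a b) {x y : PauliCode n} (hx : x ∈ line a b)
    (hy : y ∈ line a b) : symp x y = 0 := by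
  have hab := h.2.2.2
  have hba : symp b a = 0 := by rw [symp_comm, hab]
  simp only [line, Finset.mem_insert, Finset.mem_singleton] at hx hy
  rcases hx with rfl | rfl | rfl <;> rcases hy with rfl | rfl | rfl <;>
    simp [symp_add_left, symp_add_right, symp_self, hab, hba]

/-- Totally isotropic subspaces of `F₂⁴` have dimension at most `2`. -/
lemma eq_add {u v w : PauliCode 2} (huv : IsIsotropicPair u v) (huw : IsIsotropicPair u w)
    (hvw : IsIsotropicPair v w) : w = u + v := by
  have key : ∀ u v w : PauliCode 2,
      IsIsotropicPair u v ∧ IsIsotropicPair u w ∧ IsIsotropicPair v w → w = u + v := by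
    decide
  exact key u v w ⟨huv, huw, hvw⟩

end IsIsotropicPair

lemma _root_.IsMaxClass.exists_eq_image_line {C : Set (QMat 2)} (h : IsMaxClass 2 C) :
    ∃ a b : PauliCode 2, IsIsotropicPair a b ∧ C = pauli '' (line a b : Set (PauliCode 2)) := by
  obtain ⟨-, hcard, hpauli, hcomm, -⟩ := h
  obtain ⟨U, V, W, hUV, hUW, hVW, rfl⟩ := Set.ncard_eq_three.mp hcard
  have label (M) (hM : M ∈ ({U, V, W} : Set (QMat 2))) : ∃ v, v ≠ 0 ∧ pauli v = M := by
    obtain ⟨v, rfl⟩ := isPauliOp_iff.mp (hpauli M hM).1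
    exact ⟨v, fun h0 => (hpauli _ hM).2 (pauli_eq_one_iff.mpr h0), rfl⟩
  obtain ⟨u, hu, rfl⟩ := label U (by simp)
  obtain ⟨v, hv, rfl⟩ := label V (by simp)
  obtain ⟨w, hw, rfl⟩ := label W (by simp)
  have iso {x y : PauliCode 2} (hx : x ≠ 0) (hy : y ≠ 0) (hxy : pauli x ≠ pauli y)
      (hc : Commute (pauli x) (pauli y)) : IsIsotropicPair x y :=
    ⟨hx, hy, fun h => hxy (congrArg pauli h), commute_pauli_iff.mp hc⟩
  have huv := iso hu hv hUV (hcomm _ (by simp) _ (by simp))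
  have huw := iso hu hw hUW (hcomm _ (by simp) _ (by simp))
  have hvw := iso hv hw hVW (hcomm _ (by simp) _ (by simp))
  refine ⟨u, v, huv, ?_⟩
  simp [line, Set.image_insert_eq, huv.eq_add huw hvw]

lemma isMaxClass_image_line {a b : PauliCode 2} (h : IsIsotropicPair a b) :
    IsMaxClass 2 (pauli '' (line a b : Set (PauliCode 2))) := by
  refine ⟨(line a b).finite_toSet.image _, ?_, ?_, ?_, ?_⟩
  · rw [Set.ncard_image_of_injective _ pauli_injective, Set.ncard_coe_finset, h.card_line]
    rfl
  · rintro _ ⟨x, hx, rfl⟩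
    exact ⟨isPauliOp_iff.mpr ⟨x, rfl⟩,
      fun h1 => h.zero_notMem_line (pauli_eq_one_iff.mp h1 ▸ hx)⟩
  · rintro _ ⟨x, hx, rfl⟩ _ ⟨y, hy, rfl⟩
    exact commute_pauli_iff.mpr (h.symp_eq_zero hx hy)
  · rintro _ ⟨x, -, rfl⟩ _ ⟨y, -, rfl⟩ hne hph
    exact hne (congrArg pauli (phaseEq_pauli_iff.mp hph))

/-- Generators of the 15 isotropic lines of `F₂⁴`. -/
def lineGens : Fin 15 → PauliCode 2 × PauliCode 2 := ![
  (![(1, 0), (0, 0)], ![(0, 0), (1, 0)]),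
  (![(1, 0), (0, 0)], ![(0, 0), (0, 1)]),
  (![(1, 0), (0, 0)], ![(0, 0), (1, 1)]),
  (![(0, 1), (0, 0)], ![(0, 0), (1, 0)]),
  (![(0, 1), (0, 0)], ![(0, 0), (0, 1)]),
  (![(0, 1), (0, 0)], ![(0, 0), (1, 1)]),
  (![(1, 1), (0, 0)], ![(0, 0), (1, 0)]),
  (![(1, 1), (0, 0)], ![(0, 0), (0, 1)]),
  (![(1, 1), (0, 0)], ![(0, 0), (1, 1)]),
  (![(1, 0), (1, 0)], ![(0, 1), (0, 1)]),
  (![(1, 0), (1, 0)], ![(1, 1), (0, 1)]),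
  (![(0, 1), (1, 0)], ![(1, 0), (0, 1)]),
  (![(0, 1), (1, 0)], ![(1, 1), (0, 1)]),
  (![(1, 1), (1, 0)], ![(1, 0), (0, 1)]),
  (![(1, 1), (1, 0)], ![(0, 1), (0, 1)])]

def isotropicLine (i : Fin 15) : Finset (PauliCode 2) := line (lineGens i).1 (lineGens i).2

lemma isIsotropicPair_lineGens : ∀ i, IsIsotropicPair (lineGens i).1 (lineGens i).2 := by
  decide

lemma exists_line_eq_isotropicLine :
    ∀ a b : PauliCode 2, IsIsotropicPair a b → ∃ i, line a b = isotropicLine i := by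
  decide

lemma exists_unextendible_isotropicLine : ∀ i j, Disjoint (isotropicLine i) (isotropicLine j) →
    ∃ k, Disjoint (isotropicLine k) (isotropicLine i) ∧
      Disjoint (isotropicLine k) (isotropicLine j) ∧
      ∀ l, ¬ Disjoint (isotropicLine l)
        (isotropicLine i ∪ isotropicLine j ∪ isotropicLine k) := by
  decide

lemma exists_unextendible_line {a b c d : PauliCode 2} (hab : IsIsotropicPair a b)
    (hcd : IsIsotropicPair c d) (h : Disjoint (line a b) (line c d)) :
    ∃ g k, IsIsotropicPair g k ∧ Disjoint (line g k) (line a b) ∧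
      Disjoint (line g k) (line c d) ∧
      ∀ p q, IsIsotropicPair p q →
        ¬ Disjoint (line p q) (line a b ∪ line c d ∪ line g k) := by
  obtain ⟨i, hi⟩ := exists_line_eq_isotropicLine a b hab
  obtain ⟨j, hj⟩ := exists_line_eq_isotropicLine c d hcd
  rw [hi, hj] at h ⊢
  obtain ⟨k, hki, hkj, hmax⟩ := exists_unextendible_isotropicLine i j h
  refine ⟨(lineGens k).1, (lineGens k).2, isIsotropicPair_lineGens k, hki, hkj,
    fun p q hpq => ?_⟩
  obtain ⟨l, hl⟩ := exists_line_eq_isotropicLine p q hpq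
  rw [hl]
  exact hmax l

end PauliCode

open PauliCode

/-- For any two disjoint maximal commuting Pauli classes `C₁`, `C₂` in `d = 4`
there is a third maximal commuting Pauli class `C₃'`, disjoint from both, such that the
family `{C₁, C₂, C₃'}` is unextendible. -/
theorem exists_unextendible_triple_d4 (C₁ C₂ : Set (QMat 2))
    (h1 : IsMaxClass 2 C₁) (h2 : IsMaxClass 2 C₂) (hd : ClassDisjoint C₁ C₂) :
    ∃ C₃' : Set (QMat 2), IsMaxClass 2 C₃' ∧
      ClassDisjoint C₃' C₁ ∧ ClassDisjoint C₃' C₂ ∧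
      ¬ ∃ R : Set (QMat 2), IsMaxClass 2 R ∧
          ∀ U ∈ R, ∀ V ∈ C₁ ∪ C₂ ∪ C₃', ¬ PhaseEq U V := by
  obtain ⟨a, b, hab, rfl⟩ := h1.exists_eq_image_line
  obtain ⟨c, d, hcd, rfl⟩ := h2.exists_eq_image_line
  obtain ⟨g, k, hgk, hg1, hg2, hmax⟩ :=
    exists_unextendible_line hab hcd (classDisjoint_image_pauli_iff.mp hd)
  refine ⟨pauli '' (line g k : Set (PauliCode 2)), isMaxClass_image_line hgk,
    classDisjoint_image_pauli_iff.mpr hg1, classDisjoint_image_pauli_iff.mpr hg2, ?_⟩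
  rintro ⟨R, hR, hRC⟩
  obtain ⟨p, q, hpq, rfl⟩ := hR.exists_eq_image_line
  refine hmax p q hpq (classDisjoint_image_pauli_iff.mp ?_)
  rw [Finset.coe_union, Finset.coe_union, Set.image_union, Set.image_union]
  exact hRC
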